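/- arXiv:1405.0072 — 3 statements merged into one kernel-verified Lean document; each statement's English description precedes it below -/
import Mathlib

section
/- Fix an integer n ≥ 1 and nonnegative integers k_0, k_1, …, k_n, and define P_q(k_0, …, k_n) = ∏_{m=1}^{n} [k_{m−1} + k_m − 1 choose k_m]_q, with the convention that a factor with k_{m−1} = k_m = 0 equals 1 and that a Gaussian binomial with lower entry exceeding the upper entry is 0. Then for every integer τ_0 with 0 ≤ τ_0 ≤ k_0, one has the polynomial identity P_q(k_0, …, k_n) = Σ over all tuples (τ_1, …, τ_n) with 0 ≤ τ_i ≤ k_i of P_q(τ_0, τ_1, …, τ_n) · P_q(k_0 − τ_0, k_1 − τ_1, …, k_n − τ_n) · q^{Σ_{i=0}^{n−1} τ_i (k_{i+1} − τ_{i+1})}. -/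
/-! The factor `[a + b - 1 choose b]_q` of `P_q` is the coefficient of `z^b` in
`G_a(z) = ∏_{i < a} (1 - q^i z)⁻¹`. Splitting the product gives `G_{s+r}(z) = G_s(z) G_r(q^s z)`,
a `q`-Vandermonde convolution
`[s + r + b - 1 choose b]_q = ∑_{t + u = b} [s + t - 1 choose t]_q [r + u - 1 choose u]_q q^{s u}`.
Over `ℕ[q]` these inverses do not exist, so `G_{a+1}(z) = G_a(q z) ∑_j z^j` is derived from the
`q`-Pascal rule instead. Applying the convolution to the last factor of `P_q(k_0, …, k_n)` with
`s = τ_{n-1}`, `r = k_{n-1} - τ_{n-1}` gives the identity by induction on `n`. -/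

open Polynomial

/-- A partition: a weakly decreasing, finitely supported sequence of naturals;
`parts i` is the `(i+1)`-st part `λ_{i+1}`. -/
structure YPartition where
  parts : ℕ → ℕ
  antitone : ∀ ⦃i j : ℕ⦄, i ≤ j → parts j ≤ parts i
  finite_support : (Function.support parts).Finite

namespace YPartition

/-- Cells, 0-indexed: `(i, j)` is the cell in row `i+1`, column `j+1`. -/
def cells (μ : YPartition) : Set (ℕ × ℕ) := {c | c.2 < μ.parts c.1}

/-- The size `|μ|` of a partition: the number of cells of its Young diagram. -/
noncomputable def size (μ : YPartition) : ℕ := μ.cells.ncard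

/-- The arm length of a cell: the number of cells in its row strictly to its right. -/
def arm (μ : YPartition) (c : ℕ × ℕ) : ℕ := μ.parts c.1 - (c.2 + 1)

/-- The leg length of a cell: the number of cells in its column strictly below it. -/
noncomputable def leg (μ : YPartition) (c : ℕ × ℕ) : ℕ :=
  {r : ℕ | c.1 < r ∧ c.2 < μ.parts r}.ncard

/-- The number of nonzero parts. -/
noncomputable def numParts (μ : YPartition) : ℕ := {i : ℕ | μ.parts i ≠ 0}.ncard

end YPartition

/-- The Gaussian binomial coefficient `[n choose k]_t`, a polynomial in `t` with
natural number coefficients (`0` when `k > n`). -/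
noncomputable def gaussBinom : ℕ → ℕ → Polynomial ℕ
  | _, 0 => 1
  | 0, _ + 1 => 0
  | n + 1, k + 1 => gaussBinom n k + X ^ (k + 1) * gaussBinom n (k + 1)
  termination_by a _ => a

/-- The Gaussian binomial coefficient with integer entries: `0` if `b < 0` or `b > a`. -/
noncomputable def gbinomZ (a b : ℤ) : Polynomial ℕ :=
  if 0 ≤ b ∧ b ≤ a then gaussBinom a.toNat b.toNat else 0

/-- `P_q(k_0, …, k_n) = ∏_{m=1}^{n} [k_{m-1} + k_m - 1 choose k_m]_q`, where a factor
with `k_{m-1} = k_m = 0` equals `1`. -/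
noncomputable def Pq (n : ℕ) (k : ℕ → ℕ) : Polynomial ℕ :=
  ∏ m ∈ Finset.Icc 1 n,
    (if k (m - 1) = 0 ∧ k m = 0 then 1
      else gbinomZ ((k (m - 1) : ℤ) + k m - 1) (k m))

open Finset.HasAntidiagonal (antidiagonal)
open PowerSeries (rescale)

theorem gaussBinom_zero_right (n : ℕ) : gaussBinom n 0 = 1 := by
  cases n <;> rw [gaussBinom]

theorem gaussBinom_eq_zero_of_lt {n k : ℕ} (h : n < k) : gaussBinom n k = 0 := by
  induction n generalizing k with
  | zero => obtain ⟨k, rfl⟩ := Nat.exists_eq_add_of_lt h; rw [gaussBinom]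
  | succ n ih =>
    obtain ⟨k, rfl⟩ : ∃ m, k = m + 1 := ⟨k - 1, by omega⟩
    rw [gaussBinom, ih (by omega), ih (by omega), mul_zero, add_zero]

theorem gbinomZ_natCast (n k : ℕ) : gbinomZ n k = gaussBinom n k := by
  by_cases h : k ≤ n
  · rw [gbinomZ, if_pos (by omega), Int.toNat_natCast, Int.toNat_natCast]
  · rw [gbinomZ, if_neg (by omega), gaussBinom_eq_zero_of_lt (by omega)]

noncomputable def qMultichoose (a b : ℕ) : ℕ[X] :=
  if a = 0 ∧ b = 0 then 1 else gbinomZ ((a : ℤ) + b - 1) b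

theorem qMultichoose_succ_left (a b : ℕ) : qMultichoose (a + 1) b = gaussBinom (a + b) b := by
  rw [qMultichoose, if_neg (by omega), ← gbinomZ_natCast]
  congr 1
  push_cast
  ring

theorem qMultichoose_succ_right (a b : ℕ) :
    qMultichoose a (b + 1) = gaussBinom (a + b) (b + 1) := by
  rw [qMultichoose, if_neg (by omega), ← gbinomZ_natCast]
  congr 1
  push_cast
  ring

theorem qMultichoose_zero_right (a : ℕ) : qMultichoose a 0 = 1 := by
  cases a with
  | zero => simp [qMultichoose]
  | succ a => rw [qMultichoose_succ_left, gaussBinom_zero_right]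

theorem qMultichoose_zero_succ (b : ℕ) : qMultichoose 0 (b + 1) = 0 := by
  rw [qMultichoose_succ_right, gaussBinom_eq_zero_of_lt (by omega)]

theorem qMultichoose_succ_succ (a b : ℕ) :
    qMultichoose (a + 1) (b + 1) =
      qMultichoose (a + 1) b + X ^ (b + 1) * qMultichoose a (b + 1) := by
  rw [qMultichoose_succ_left, qMultichoose_succ_left, qMultichoose_succ_right,
    show a + (b + 1) = a + b + 1 by omega, gaussBinom]

theorem qMultichoose_succ_left_eq_sum (a b : ℕ) :
    qMultichoose (a + 1) b = ∑ j ∈ Finset.range (b + 1), X ^ j * qMultichoose a j := by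
  induction b with
  | zero => simp [qMultichoose_zero_right]
  | succ b ih => rw [Finset.sum_range_succ, ← ih, qMultichoose_succ_succ]

noncomputable def qMultichooseSeries (a : ℕ) : PowerSeries ℕ[X] :=
  PowerSeries.mk (qMultichoose a)

theorem qMultichooseSeries_zero : qMultichooseSeries 0 = 1 := by
  ext (_ | b) <;> simp [qMultichooseSeries, PowerSeries.coeff_one, qMultichoose_zero_right,
    qMultichoose_zero_succ]

theorem qMultichooseSeries_succ (a : ℕ) :
    qMultichooseSeries (a + 1) = rescale X (qMultichooseSeries a) * PowerSeries.mk 1 := by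
  ext b
  rw [PowerSeries.coeff_mul, Finset.Nat.sum_antidiagonal_eq_sum_range_succ_mk]
  simp [qMultichooseSeries, qMultichoose_succ_left_eq_sum]

theorem qMultichooseSeries_add (s r : ℕ) :
    qMultichooseSeries (s + r) = qMultichooseSeries s * rescale (X ^ s) (qMultichooseSeries r) := by
  induction s with
  | zero => simp [qMultichooseSeries_zero]
  | succ s ih =>
    rw [Nat.add_right_comm, qMultichooseSeries_succ, ih, map_mul, PowerSeries.rescale_rescale,
      qMultichooseSeries_succ, ← pow_succ]
    ring

theorem qMultichoose_add (s r b : ℕ) :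
    qMultichoose (s + r) b =
      ∑ p ∈ antidiagonal b, qMultichoose s p.1 * qMultichoose r p.2 * X ^ (s * p.2) := by
  rw [← PowerSeries.coeff_mk b (qMultichoose (s + r)), ← qMultichooseSeries, qMultichooseSeries_add,
    PowerSeries.coeff_mul]
  refine Finset.sum_congr rfl fun p _ => ?_
  simp only [qMultichooseSeries, PowerSeries.coeff_rescale, PowerSeries.coeff_mk, pow_mul]
  ring

theorem Pq_eq_prod (n : ℕ) (k : ℕ → ℕ) :
    Pq n k = ∏ m ∈ Finset.Icc 1 n, qMultichoose (k (m - 1)) (k m) := rfl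

theorem Pq_zero (k : ℕ → ℕ) : Pq 0 k = 1 := by
  simp [Pq_eq_prod]

theorem Pq_succ (n : ℕ) (k : ℕ → ℕ) : Pq (n + 1) k = Pq n k * qMultichoose (k n) (k (n + 1)) := by
  rw [Pq_eq_prod, Pq_eq_prod, Finset.prod_Icc_succ_top (by omega), Nat.add_sub_cancel]

theorem Pq_congr {n : ℕ} {k k' : ℕ → ℕ} (h : ∀ i ≤ n, k i = k' i) : Pq n k = Pq n k' := by
  refine Finset.prod_congr rfl fun m hm => ?_
  rw [Finset.mem_Icc] at hm
  rw [h (m - 1) (by omega), h m hm.2]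

theorem Pq_update_succ (n : ℕ) (τ : ℕ → ℕ) (t : ℕ) :
    Pq (n + 1) (Function.update τ (n + 1) t) = Pq n τ * qMultichoose (τ n) t := by
  rw [Pq_succ, Pq_congr fun i hi => Function.update_of_ne (by omega) _ _,
    Function.update_of_ne (by omega), Function.update_self]

theorem sum_range_succ_update (n : ℕ) (k τ : ℕ → ℕ) (t : ℕ) :
    ∑ i ∈ Finset.range (n + 1),
        Function.update τ (n + 1) t i * (k (i + 1) - Function.update τ (n + 1) t (i + 1)) =
      ∑ i ∈ Finset.range n, τ i * (k (i + 1) - τ (i + 1)) + τ n * (k (n + 1) - t) := by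
  rw [Finset.sum_range_succ, Function.update_of_ne (by omega), Function.update_self]
  congr 1
  refine Finset.sum_congr rfl fun i hi => ?_
  rw [Finset.mem_range] at hi
  rw [Function.update_of_ne (by omega), Function.update_of_ne (by omega)]

open Classical in
noncomputable def boxTuples (k : ℕ → ℕ) (τ₀ : ℕ) : ℕ → Finset (ℕ → ℕ)
  | 0 => {Pi.single 0 τ₀}
  | n + 1 => (boxTuples k τ₀ n ×ˢ Finset.range (k (n + 1) + 1)).image
      fun p => Function.update p.1 (n + 1) p.2

theorem mem_boxTuples {k : ℕ → ℕ} {τ₀ n : ℕ} {τ : ℕ → ℕ} :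
    τ ∈ boxTuples k τ₀ n ↔
      τ 0 = τ₀ ∧ (∀ i, 1 ≤ i → i ≤ n → τ i ≤ k i) ∧ (∀ i, n < i → τ i = 0) := by
  induction n generalizing τ with
  | zero =>
    rw [boxTuples, Finset.mem_singleton]
    constructor
    · rintro rfl
      exact ⟨by simp, fun i hi hi' => absurd (hi.trans hi') (by decide),
        fun i hi => by simp [hi.ne']⟩
    · rintro ⟨h0, -, hpos⟩
      funext i
      rcases i with _ | i
      · simp [h0]
      · simp [hpos _ i.succ_pos]
  | succ n ih =>
    simp only [boxTuples, Finset.mem_image, Finset.mem_product, Finset.mem_range, Prod.exists, ih]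
    constructor
    · rintro ⟨σ, t, ⟨⟨h0, hle, hzero⟩, ht⟩, rfl⟩
      refine ⟨by rw [Function.update_of_ne (by omega), h0], fun i hi₁ hi => ?_, fun i hi => ?_⟩
      · rcases eq_or_ne i (n + 1) with rfl | hne
        · rw [Function.update_self]; omega
        · rw [Function.update_of_ne hne]; exact hle i hi₁ (by omega)
      · rw [Function.update_of_ne (by omega)]; exact hzero i (by omega)
    · rintro ⟨h0, hle, hzero⟩
      refine ⟨Function.update τ (n + 1) 0, τ (n + 1), ⟨⟨?_, fun i hi₁ hi => ?_, fun i hi => ?_⟩,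
        Nat.lt_succ_of_le (hle _ (by omega) le_rfl)⟩, by simp⟩
      · rw [Function.update_of_ne (by omega), h0]
      · rw [Function.update_of_ne (by omega)]; exact hle i hi₁ (by omega)
      · rcases eq_or_ne i (n + 1) with rfl | hne
        · rw [Function.update_self]
        · rw [Function.update_of_ne hne]; exact hzero i (by omega)

open Classical in
theorem sum_boxTuples_succ {M : Type*} [AddCommMonoid M] (k : ℕ → ℕ) (τ₀ n : ℕ)
    (f : (ℕ → ℕ) → M) :
    ∑ τ ∈ boxTuples k τ₀ (n + 1), f τ =
      ∑ τ ∈ boxTuples k τ₀ n, ∑ t ∈ Finset.range (k (n + 1) + 1),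
        f (Function.update τ (n + 1) t) := by
  rw [boxTuples, Finset.sum_image, Finset.sum_product]
  rintro ⟨σ, t⟩ hσt ⟨σ', t'⟩ hσt' h
  have hσ := (mem_boxTuples.mp (Finset.mem_product.mp hσt).1).2.2 (n + 1) (by omega)
  have hσ' := (mem_boxTuples.mp (Finset.mem_product.mp hσt').1).2.2 (n + 1) (by omega)
  refine Prod.ext (funext fun i => ?_) (by simpa using congrFun h (n + 1))
  rcases eq_or_ne i (n + 1) with rfl | hne
  · rw [hσ, hσ']
  · simpa [hne] using congrFun h i

theorem Pq_eq_sum_boxTuples (n : ℕ) (k : ℕ → ℕ) (τ₀ : ℕ) (hτ : τ₀ ≤ k 0) :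
    Pq n k = ∑ τ ∈ boxTuples k τ₀ n, Pq n τ * Pq n (fun i => k i - τ i) *
        X ^ (∑ i ∈ Finset.range n, τ i * (k (i + 1) - τ (i + 1))) := by
  induction n with
  | zero => simp [boxTuples, Pq_zero]
  | succ n ih =>
    rw [Pq_succ, ih, Finset.sum_mul, sum_boxTuples_succ]
    refine Finset.sum_congr rfl fun τ hτ' => ?_
    have hτn : τ n ≤ k n := by
      obtain ⟨h0, hle, -⟩ := mem_boxTuples.mp hτ'
      rcases n with _ | n
      · exact h0 ▸ hτ
      · exact hle _ (by omega) le_rfl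
    have hsplit := qMultichoose_add (τ n) (k n - τ n) (k (n + 1))
    rw [Nat.add_sub_cancel' hτn, Finset.Nat.sum_antidiagonal_eq_sum_range_succ_mk] at hsplit
    rw [hsplit, Finset.mul_sum]
    refine Finset.sum_congr rfl fun t _ => ?_
    have hsub : (fun i => k i - Function.update τ (n + 1) t i) =
        Function.update (fun i => k i - τ i) (n + 1) (k (n + 1) - t) :=
      funext fun i => Function.apply_update (fun i x => k i - x) τ (n + 1) t i
    rw [Pq_update_succ, hsub, Pq_update_succ, sum_range_succ_update, pow_add, pow_mul]
    ring

theorem statement9_general (n : ℕ) (k : ℕ → ℕ) (τ₀ : ℕ) (hτ : τ₀ ≤ k 0) :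
    Pq n k =
      ∑ᶠ (τ : ℕ → ℕ)
        (_ : τ 0 = τ₀ ∧ (∀ i, 1 ≤ i → i ≤ n → τ i ≤ k i) ∧ (∀ i, n < i → τ i = 0)),
        Pq n τ * Pq n (fun i => k i - τ i) *
          X ^ (∑ i ∈ Finset.range n, τ i * (k (i + 1) - τ (i + 1))) := by
  rw [Pq_eq_sum_boxTuples n k τ₀ hτ, ← finsum_mem_coe_finset]
  simp only [Finset.mem_coe, mem_boxTuples]

theorem statement9 (n : ℕ) (hn : 1 ≤ n) (k : ℕ → ℕ) (τ₀ : ℕ) (hτ : τ₀ ≤ k 0) :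
    Pq n k =
      ∑ᶠ (τ : ℕ → ℕ)
        (_ : τ 0 = τ₀ ∧ (∀ i, 1 ≤ i → i ≤ n → τ i ≤ k i) ∧ (∀ i, n < i → τ i = 0)),
        Pq n τ * Pq n (fun i => k i - τ i) *
          X ^ (∑ i ∈ Finset.range n, τ i * (k (i + 1) - τ (i + 1))) :=
  statement9_general n k τ₀ hτ
end

section
/- For any partition μ, let d_k(μ) = #{cells (i,j) of μ : i + j = k} for k ≥ 2, and let j(μ) = Σ_{k ≥ 2} (−1)^k d_k(μ) (an integer; the sum is finite). Then the size of the 2-core of μ equals binom(2·j(μ), 2) = j(μ)·(2·j(μ) − 1). -/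
open Polynomial

/-- A partition: a weakly decreasing, finitely supported sequence of naturals;
`parts i` is the `(i+1)`-st part `λ_{i+1}`. -/
structure NatSeqPartition where
  parts : ℕ → ℕ
  antitone : ∀ ⦃i j : ℕ⦄, i ≤ j → parts j ≤ parts i
  finite_support : (Function.support parts).Finite

namespace NatSeqPartition

/-- Cells, 0-indexed: `(i, j)` is the cell in row `i+1`, column `j+1`. -/
def cells (μ : NatSeqPartition) : Set (ℕ × ℕ) := {c | c.2 < μ.parts c.1}

/-- The size `|μ|` of a partition: the number of cells of its Young diagram. -/
noncomputable def size (μ : NatSeqPartition) : ℕ := μ.cells.ncard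

/-- The arm length of a cell: the number of cells in its row strictly to its right. -/
def arm (μ : NatSeqPartition) (c : ℕ × ℕ) : ℕ := μ.parts c.1 - (c.2 + 1)

/-- The leg length of a cell: the number of cells in its column strictly below it. -/
noncomputable def leg (μ : NatSeqPartition) (c : ℕ × ℕ) : ℕ :=
  {r : ℕ | c.1 < r ∧ c.2 < μ.parts r}.ncard

/-- The number of nonzero parts. -/
noncomputable def numParts (μ : NatSeqPartition) : ℕ := {i : ℕ | μ.parts i ≠ 0}.ncard

end NatSeqPartition

/-- The `m`-diagonal pattern: `d_k(μ)` is the number of cells `(i,j)` (1-indexed) of `μ`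
with `(m-1)·i + j = k`. -/
noncomputable def mdiag (m : ℕ) (μ : NatSeqPartition) (k : ℕ) : ℕ :=
  {c ∈ μ.cells | (m - 1) * (c.1 + 1) + (c.2 + 1) = k}.ncard

/-- A single domino removal: either one part decreases by `2`, or two equal consecutive
parts each decrease by `1`. -/
def DominoStep (lam mu : NatSeqPartition) : Prop :=
  (∃ i, lam.parts i = mu.parts i + 2 ∧ ∀ j, j ≠ i → mu.parts j = lam.parts j) ∨
  (∃ i, lam.parts i = lam.parts (i + 1) ∧ lam.parts i = mu.parts i + 1 ∧
    lam.parts (i + 1) = mu.parts (i + 1) + 1 ∧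
    ∀ j, j ≠ i → j ≠ i + 1 → mu.parts j = lam.parts j)

/-- `mu` is the 2-core of `lam`: it is obtained from `lam` by repeated domino removals
and admits no further domino removal. -/
def TwoCoreOf (lam mu : NatSeqPartition) : Prop :=
  Relation.ReflTransGen DominoStep lam mu ∧ ∀ ν, ¬ DominoStep mu ν

/-- `j(μ) = Σ_{k ≥ 2} (-1)^k d_k(μ)`, where `d_k` is the 2-diagonal pattern. -/
noncomputable def jstat (μ : NatSeqPartition) : ℤ :=
  ∑ᶠ k : ℕ, (-1 : ℤ) ^ k * (mdiag 2 μ k : ℤ)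

/-! Domino removals take away two cells `(i, j)` with adjacent values of `i + j`, so they do not
change the alternating count `j(μ) = ∑_{(i,j) ∈ μ} (-1)^(i+j)`. A partition admitting no domino
removal is a staircase `(m, m-1, …, 1)`: two consecutive parts differing by at least `2` allow a
horizontal domino, and a run of equal positive parts allows a vertical one at its end. For the
staircase, `j = ∑_{k<m} (-1)^k (k+1)` satisfies `4j - 1 = ±(2m+1)`, hence
`8 j (2j - 1) = (4j-1)^2 - 1 = 4m(m+1) = 8 |staircase|`. -/

open Finset

lemma Nat.exists_le_and_not_succ {p : ℕ → Prop} {i n : ℕ} (hi : p i) (hn : ¬p (i + n)) :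
    ∃ j, i ≤ j ∧ p j ∧ ¬p (j + 1) := by
  induction n generalizing i with
  | zero => exact absurd hi hn
  | succ n ih =>
    by_cases hi₁ : p (i + 1)
    · obtain ⟨j, hij, hj⟩ := ih hi₁ (by rwa [Nat.add_right_comm])
      exact ⟨j, by omega, hj⟩
    · exact ⟨i, le_rfl, hi, hi₁⟩

def staircase (m : ℕ) : Finset (ℕ × ℕ) := {c ∈ range m ×ˢ range m | c.1 + c.2 < m}

lemma mem_staircase {m : ℕ} {c : ℕ × ℕ} : c ∈ staircase m ↔ c.1 + c.2 < m := by
  simp only [staircase, mem_filter, mem_product, mem_range]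
  omega

lemma staircase_zero : staircase 0 = ∅ := by
  ext c
  simp [mem_staircase]

lemma staircase_succ (m : ℕ) : staircase (m + 1) = staircase m ∪ antidiagonal m := by
  ext c
  simp only [mem_union, mem_staircase, HasAntidiagonal.mem_antidiagonal]
  omega

lemma disjoint_staircase_antidiagonal (m : ℕ) : Disjoint (staircase m) (antidiagonal m) :=
  disjoint_left.mpr fun c hc hc' => by
    rw [mem_staircase] at hc
    rw [HasAntidiagonal.mem_antidiagonal] at hc'
    omega

lemma sum_staircase {M : Type*} [AddCommMonoid M] (f : ℕ × ℕ → M) (m : ℕ) :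
    ∑ c ∈ staircase m, f c = ∑ k ∈ range m, ∑ c ∈ antidiagonal k, f c := by
  induction m with
  | zero => simp [staircase_zero]
  | succ m ih =>
    rw [staircase_succ, sum_union (disjoint_staircase_antidiagonal m), ih, sum_range_succ]

lemma two_mul_card_staircase (m : ℕ) : 2 * #(staircase m) = m * (m + 1) := by
  induction m with
  | zero => simp [staircase_zero]
  | succ m ih =>
    rw [staircase_succ, card_union_of_disjoint (disjoint_staircase_antidiagonal m),
      Nat.card_antidiagonal]
    linear_combination ih

lemma sum_neg_one_pow_staircase (m : ℕ) :
    ∑ c ∈ staircase m, (-1 : ℤ) ^ (c.1 + c.2) = ∑ k ∈ range m, (-1 : ℤ) ^ k * (k + 1) := by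
  rw [sum_staircase]
  refine sum_congr rfl fun k _ => ?_
  rw [sum_congr rfl fun c hc => by rw [HasAntidiagonal.mem_antidiagonal.mp hc], sum_const,
    Nat.card_antidiagonal, nsmul_eq_mul, mul_comm]
  push_cast
  rfl

lemma four_mul_sum_neg_one_pow_mul_succ_sub_one (m : ℕ) :
    4 * ∑ k ∈ range m, (-1 : ℤ) ^ k * (k + 1) - 1 = (-1) ^ (m + 1) * (2 * m + 1) := by
  induction m with
  | zero => simp
  | succ m ih =>
    rw [sum_range_succ, pow_succ, pow_succ]
    push_cast
    linear_combination ih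

lemma eq_mul_two_mul_sub_one_of_four_mul_sub_one_eq {A s : ℤ} {m : ℕ}
    (hA : 2 * A = m * (m + 1)) (hs : 4 * s - 1 = (-1) ^ (m + 1) * (2 * m + 1)) :
    A = s * (2 * s - 1) := by
  have hsign : ((-1 : ℤ) ^ (m + 1)) ^ 2 = 1 := by rw [← pow_mul, mul_comm, pow_mul]; simp
  have h8 : 8 * A = 8 * (s * (2 * s - 1)) := by
    linear_combination 4 * hA - (4 * s - 1 + (-1) ^ (m + 1) * (2 * m + 1)) * hs
      - (2 * m + 1) ^ 2 * hsign
  omega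

namespace NatSeqPartition

lemma cells_finite (μ : NatSeqPartition) : μ.cells.Finite := by
  refine (μ.finite_support.prod (Set.finite_Iio (μ.parts 0))).subset fun c hc => ?_
  have hc : c.2 < μ.parts c.1 := hc
  exact ⟨by simp only [Function.mem_support]; omega,
    lt_of_lt_of_le hc (μ.antitone (Nat.zero_le _))⟩

lemma size_eq_card {μ : NatSeqPartition} {F : Finset (ℕ × ℕ)} (hF : ↑F = μ.cells) :
    μ.size = #F := by
  rw [size, ← hF, Set.ncard_coe_finset]

lemma exists_parts_eq_zero (ν : NatSeqPartition) : ∃ n, ν.parts n = 0 := by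
  obtain ⟨n, -, hn⟩ := Set.infinite_univ.exists_notMem_finite ν.finite_support
  exact ⟨n, Function.notMem_support.mp hn⟩

def ofLE (ν : NatSeqPartition) (f : ℕ → ℕ) (hf : Antitone f) (hle : ∀ i, f i ≤ ν.parts i) :
    NatSeqPartition where
  parts := f
  antitone := fun _ _ hij => hf hij
  finite_support := ν.finite_support.subset fun i hi hνi => hi (by simpa [hνi] using hle i)

lemma exists_dominoStep_of_add_two_le {ν : NatSeqPartition} {i : ℕ}
    (h : ν.parts (i + 1) + 2 ≤ ν.parts i) : ∃ ν', DominoStep ν ν' := by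
  let f j := if j = i then ν.parts j - 2 else ν.parts j
  have hf : Antitone f := antitone_nat_of_succ_le fun a => by
    have := ν.antitone (Nat.le_add_right a 1)
    simp only [f]
    split_ifs <;> subst_vars <;> omega
  refine ⟨ν.ofLE f hf fun j => ?_, Or.inl ⟨i, ?_, fun j hj => ?_⟩⟩
  · simp only [f]; split_ifs <;> omega
  · show ν.parts i = f i + 2
    simp only [f, if_pos]; omega
  · show f j = ν.parts j
    simp only [f, if_neg hj]

lemma exists_dominoStep_of_eq_of_lt {ν : NatSeqPartition} {i : ℕ}
    (heq : ν.parts (i + 1) = ν.parts i) (hlt : ν.parts (i + 2) < ν.parts (i + 1)) :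
    ∃ ν', DominoStep ν ν' := by
  let f j := if i ≤ j ∧ j ≤ i + 1 then ν.parts j - 1 else ν.parts j
  have hf : Antitone f := antitone_nat_of_succ_le fun a => by
    have := ν.antitone (Nat.le_add_right a 1)
    replace hlt : ν.parts (i + 1 + 1) < ν.parts (i + 1) := hlt
    obtain h | rfl | rfl | rfl | h :
        a + 1 < i ∨ a + 1 = i ∨ a = i ∨ a = i + 1 ∨ i + 1 < a := by omega
    all_goals simp only [f]; split_ifs <;> omega
  refine ⟨ν.ofLE f hf fun j => ?_, Or.inr ⟨i, heq.symm, ?_, ?_, fun j hj hj₁ => ?_⟩⟩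
  · simp only [f]; split_ifs <;> omega
  · show ν.parts i = f i + 1
    simp [f]; omega
  · show ν.parts (i + 1) = f (i + 1) + 1
    simp [f]; omega
  · show f j = ν.parts j
    simp only [f, if_neg (show ¬(i ≤ j ∧ j ≤ i + 1) by omega)]

lemma exists_dominoStep_of_parts_succ_eq {ν : NatSeqPartition} {i : ℕ} (h0 : 0 < ν.parts i)
    (heq : ν.parts (i + 1) = ν.parts i) : ∃ ν', DominoStep ν ν' := by
  obtain ⟨n, hn⟩ := ν.exists_parts_eq_zero
  have hend : ν.parts (i + n + 1) ≠ ν.parts i := by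
    have := ν.antitone (show n ≤ i + n + 1 by omega)
    omega
  -- `k + 1` is the last row of the run of parts equal to `ν.parts i`
  obtain ⟨k, hik, hk, hk₁⟩ :=
    Nat.exists_le_and_not_succ (p := fun j => ν.parts (j + 1) = ν.parts i) heq hend
  have hki : ν.parts k ≤ ν.parts i := ν.antitone hik
  have hk₁k : ν.parts (k + 1) ≤ ν.parts k := ν.antitone (Nat.le_add_right k 1)
  refine exists_dominoStep_of_eq_of_lt (i := k) (by omega)
    (lt_of_le_of_ne (ν.antitone (Nat.le_add_right _ 1)) ?_)
  rw [hk]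
  exact hk₁

lemma parts_eq_sub_of_forall_not_dominoStep {ν : NatSeqPartition}
    (h : ∀ ν', ¬DominoStep ν ν') (i : ℕ) : ν.parts i = ν.parts 0 - i := by
  have hcore : ¬∃ ν', DominoStep ν ν' := not_exists.mpr h
  induction i with
  | zero => rfl
  | succ i ih =>
    have hle : ν.parts (i + 1) ≤ ν.parts i := ν.antitone (Nat.le_add_right i 1)
    have hgap : ¬ν.parts (i + 1) + 2 ≤ ν.parts i :=
      fun h' => hcore (exists_dominoStep_of_add_two_le h')
    have hrun : ¬(0 < ν.parts i ∧ ν.parts (i + 1) = ν.parts i) :=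
      fun h' => hcore (exists_dominoStep_of_parts_succ_eq h'.1 h'.2)
    omega

lemma coe_staircase_eq_cells {ν : NatSeqPartition}
    (h : ∀ ν', ¬DominoStep ν ν') : ↑(staircase (ν.parts 0)) = ν.cells := by
  ext c
  simp only [mem_coe, mem_staircase, cells, Set.mem_ofPred_eq,
    parts_eq_sub_of_forall_not_dominoStep h c.1]
  omega

end NatSeqPartition

open NatSeqPartition

lemma mdiag_two_eq_card_filter {μ : NatSeqPartition} {F : Finset (ℕ × ℕ)} (hF : ↑F = μ.cells)
    (k : ℕ) : mdiag 2 μ k = #{c ∈ F | c.1 + c.2 + 2 = k} := by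
  rw [mdiag, ← Set.ncard_coe_finset, coe_filter]
  congr 1
  ext c
  simp only [Set.mem_ofPred_eq, ← hF, mem_coe]
  exact and_congr_right fun _ => by omega

lemma jstat_eq_sum {μ : NatSeqPartition} {F : Finset (ℕ × ℕ)} (hF : ↑F = μ.cells) :
    jstat μ = ∑ c ∈ F, (-1 : ℤ) ^ (c.1 + c.2) := by
  let diag : ℕ × ℕ → ℕ := fun c => c.1 + c.2 + 2
  have hterm : ∀ k, (-1 : ℤ) ^ k * (mdiag 2 μ k : ℤ) =
      ∑ c ∈ F with diag c = k, (-1 : ℤ) ^ (c.1 + c.2) := by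
    intro k
    rw [mdiag_two_eq_card_filter hF, mul_comm, ← nsmul_eq_mul, ← sum_const]
    refine sum_congr rfl fun c hc => ?_
    rw [← (mem_filter.mp hc).2]
    ring
  have hsupp : (Function.support fun k => (-1 : ℤ) ^ k * (mdiag 2 μ k : ℤ)) ⊆ ↑(F.image diag) := by
    intro k hk
    rw [Function.mem_support, hterm k] at hk
    obtain ⟨c, hc, -⟩ := exists_ne_zero_of_sum_ne_zero hk
    rw [mem_filter] at hc
    exact mem_image.mpr ⟨c, hc⟩
  rw [jstat, finsum_eq_sum_of_support_subset _ hsupp, sum_congr rfl fun k _ => hterm k,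
    sum_fiberwise_of_maps_to fun c hc => mem_image_of_mem diag hc]

lemma DominoStep.exists_cells_eq_insert {lam mu : NatSeqPartition} (h : DominoStep lam mu) :
    ∃ a b : ℕ × ℕ, a ∉ mu.cells ∧ b ∉ mu.cells ∧ a ≠ b ∧ a.1 + a.2 + 1 = b.1 + b.2 ∧
      lam.cells = insert a (insert b mu.cells) := by
  rcases h with ⟨i, hi, hrest⟩ | ⟨i, heq, hi, hi₁, hrest⟩
  · refine ⟨(i, mu.parts i), (i, mu.parts i + 1), by simp [cells], by simp [cells],
      by simp, by simp only; omega, ?_⟩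
    ext ⟨x, y⟩
    simp only [cells, Set.mem_insert_iff, Set.mem_ofPred_eq, Prod.mk.injEq]
    by_cases hx : x = i
    · subst hx; omega
    · rw [← hrest x hx]; omega
  · refine ⟨(i, mu.parts i), (i + 1, mu.parts i), by simp [cells], by simp [cells]; omega,
      by simp, by simp only; omega, ?_⟩
    ext ⟨x, y⟩
    simp only [cells, Set.mem_insert_iff, Set.mem_ofPred_eq, Prod.mk.injEq]
    by_cases hx : x = i
    · subst hx; omega
    by_cases hx₁ : x = i + 1
    · subst hx₁; omega
    · rw [← hrest x hx hx₁]; omega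

lemma jstat_eq_of_dominoStep {lam mu : NatSeqPartition} (h : DominoStep lam mu) :
    jstat lam = jstat mu := by
  obtain ⟨a, b, ha, hb, hab, hsign, hcells⟩ := h.exists_cells_eq_insert
  obtain ⟨F, hF⟩ := mu.cells_finite.exists_finset_coe
  have hbF : b ∉ F := by rwa [← mem_coe, hF]
  have haF : a ∉ insert b F := by simpa [← mem_coe, hF, hab] using ha
  rw [jstat_eq_sum (F := insert a (insert b F)) (by push_cast; rw [hF, hcells]),
    jstat_eq_sum hF, sum_insert haF, sum_insert hbF, ← hsign, pow_succ]
  ring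

lemma jstat_eq_of_reflTransGen {lam mu : NatSeqPartition}
    (h : Relation.ReflTransGen DominoStep lam mu) : jstat lam = jstat mu := by
  induction h with
  | refl => rfl
  | tail _ hstep ih => rw [ih, jstat_eq_of_dominoStep hstep]

/-- the 2-core of `μ` has size `binom(2·j(μ), 2) = j(μ)·(2·j(μ) - 1)`. -/
theorem statement11 (μ ν : NatSeqPartition) (h : TwoCoreOf μ ν) :
    (ν.size : ℤ) = jstat μ * (2 * jstat μ - 1) := by
  obtain ⟨hsteps, hcore⟩ := h
  have hcells := coe_staircase_eq_cells hcore
  have hsize : 2 * (ν.size : ℤ) = ν.parts 0 * (ν.parts 0 + 1) := by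
    rw [size_eq_card hcells]
    exact_mod_cast two_mul_card_staircase _
  have hj : 4 * jstat μ - 1 = (-1) ^ (ν.parts 0 + 1) * (2 * ν.parts 0 + 1) := by
    rw [jstat_eq_of_reflTransGen hsteps, jstat_eq_sum hcells, sum_neg_one_pow_staircase]
    exact four_mul_sum_neg_one_pow_mul_succ_sub_one _
  exact eq_mul_two_mul_sub_one_of_four_mul_sub_one_eq hsize hj
end

section
/- Fix m ≥ 2 and let λ be a partition with m-quotient (λ^{(0)}, …, λ^{(m−1)}) and m-shift (k_0, …, k_{m−1}). Set s_j = m·k_j + j for 0 ≤ j ≤ m−1, let i_1, …, i_m be the permutation of {0, …, m−1} with s_{i_1} < s_{i_2} < ⋯ < s_{i_m}, and let n = max over pairs i ≠ j of (|λ^{(i)}| + |λ^{(j)}|). If l ∈ {1, …, m} is an index such that |s_{i_l} − s_{i_r}| ≥ m·n for all r ≠ l, then h_{l, m−l}(λ) equals the largest part of λ^{(i_l)}. -/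
open Polynomial

/-- `h_{α,β}`: the number of cells with `α·l_v = β·(a_v + 1)` and
`(α + β) ∣ a_v + l_v + 1`. -/
noncomputable def YPartition.hooks (α β : ℕ) (μ : YPartition) : ℕ :=
  {c ∈ μ.cells | α * μ.leg c = β * (μ.arm c + 1) ∧
    (α + β) ∣ (μ.arm c + μ.leg c + 1)}.ncard

/-- The edge sequence of `μ` takes the value `0` at position `t` iff
`t ∈ {λ_i - i : i ≥ 1}`. -/
def edgeZero (μ : YPartition) (t : ℤ) : Prop :=
  ∃ i : ℕ, (μ.parts i : ℤ) - ((i : ℤ) + 1) = t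


/-!
A cell of `λ` is a pair of positions `t' < t` of the edge sequence with a `1` at `t'` and a `0`
at `t`; its hook length is `t - t'` and its leg is the number of `0`s strictly between them.
If `m` divides the hook length, `t ≡ t' (mod m)` and the cell comes from a cell of a quotient
`λ^{(j)}` of hook length `H = (t - t') / m`; the condition defining `h_{l, m-l}` then says that
the leg is `(m - l) · H`. Count the `0`s between `t'` and `t` residue class by residue class:
class `j` contributes the leg of the quotient cell, which is `< H`, and by the separation
hypothesis every class whose shift lies far below that of `j` contributes `0` while every class
far above contributes `H`. This forces `j = i_l` and the quotient cell to have leg `0`; the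
cells of leg `0` of `λ^{(i_l)}` are the bottom cells of its columns.
-/

open Finset

namespace YPartition

variable (μ : YPartition)

lemma exists_parts_eq_zero : ∃ r, μ.parts r = 0 := by
  obtain ⟨r, hr⟩ := μ.finite_support.exists_notMem
  exact ⟨r, Function.notMem_support.1 hr⟩

noncomputable def colLen (j : ℕ) : ℕ := sInf {r | μ.parts r ≤ j}

lemma lt_colLen_iff {i j : ℕ} : i < μ.colLen j ↔ j < μ.parts i := by
  obtain ⟨r, hr⟩ := μ.exists_parts_eq_zero
  have hne : {r | μ.parts r ≤ j}.Nonempty := ⟨r, by simp [hr]⟩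
  constructor
  · intro hi
    exact not_le.1 (Nat.notMem_of_lt_sInf (s := {r | μ.parts r ≤ j}) hi)
  · intro hj
    by_contra hi
    have h1 : μ.parts (μ.colLen j) ≤ j := Nat.sInf_mem hne
    have := μ.antitone (not_lt.1 hi)
    omega

lemma colLen_antitone : Antitone μ.colLen := by
  intro j j' hjj'
  by_contra h
  have := (μ.lt_colLen_iff).1 (not_le.1 h)
  have := (μ.lt_colLen_iff (i := μ.colLen j) (j := j)).2 (by omega)
  omega

def zeroPos (i : ℕ) : ℤ := (μ.parts i : ℤ) - ((i : ℤ) + 1)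

/-- The position of the `1` of the edge sequence contributed by column `j`. -/
noncomputable def onePos (j : ℕ) : ℤ := (j : ℤ) - μ.colLen j

lemma edgeZero_iff {t : ℤ} : edgeZero μ t ↔ ∃ i, μ.zeroPos i = t := Iff.rfl

lemma zeroPos_strictAnti : StrictAnti μ.zeroPos := by
  intro i i' h
  have := μ.antitone h.le
  simp only [zeroPos]
  omega

lemma onePos_strictMono : StrictMono μ.onePos := by
  intro j j' h
  have := μ.colLen_antitone h.le
  simp only [onePos]
  omega

lemma onePos_lt_zeroPos_iff {i j : ℕ} : μ.onePos j < μ.zeroPos i ↔ j < μ.parts i := by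
  have := μ.lt_colLen_iff (i := i) (j := j)
  simp only [onePos, zeroPos]
  omega

lemma onePos_ne_zeroPos (i j : ℕ) : μ.onePos j ≠ μ.zeroPos i := by
  have := (μ.lt_colLen_iff (i := i) (j := j))
  simp only [onePos, zeroPos]
  omega

lemma not_edgeZero_onePos (j : ℕ) : ¬ edgeZero μ (μ.onePos j) :=
  fun ⟨i, hi⟩ => μ.onePos_ne_zeroPos i j hi.symm

/-- If `t` is not a position of a `0`, and `i` rows have their `0` to the right of `t`,
then `t` is the position of the `1` of column `t + i`. -/
lemma exists_onePos_eq {t : ℤ} (ht : ¬ edgeZero μ t) : ∃ j, μ.onePos j = t := by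
  have hex : ∃ r, μ.zeroPos r < t := by
    refine ⟨μ.colLen 0 + t.natAbs, ?_⟩
    have : μ.parts (μ.colLen 0 + t.natAbs) = 0 := by
      by_contra h
      have := (μ.lt_colLen_iff (j := 0)).2 (Nat.pos_of_ne_zero h)
      omega
    simp only [zeroPos, this]
    omega
  set i := Nat.find hex
  have hi : μ.zeroPos i < t := Nat.find_spec hex
  have hbefore : ∀ r < i, t < μ.zeroPos r := fun r hr =>
    lt_of_le_of_ne (not_lt.1 (Nat.find_min hex hr)) fun h => ht ⟨r, h.symm⟩
  refine ⟨(t + i).toNat, ?_⟩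
  have hcol : μ.colLen (t + i).toNat = i := by
    apply le_antisymm
    · by_contra h
      have := (μ.lt_colLen_iff).1 (not_le.1 h)
      simp only [zeroPos] at hi
      omega
    · rcases Nat.eq_zero_or_pos i with h0 | hpos
      · omega
      · have h1 := hbefore (i - 1) (by omega)
        have h2 : (t + i).toNat < μ.parts (i - 1) := by
          simp only [zeroPos] at h1 hi
          omega
        have := (μ.lt_colLen_iff).2 h2
        omega
  simp only [onePos, hcol]
  simp only [zeroPos] at hi
  omega

lemma leg_eq (c : ℕ × ℕ) : μ.leg c = μ.colLen c.2 - (c.1 + 1) := by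
  have : {r : ℕ | c.1 < r ∧ c.2 < μ.parts r} = Set.Ioo c.1 (μ.colLen c.2) := by
    ext r
    simp [μ.lt_colLen_iff]
  rw [leg, this, ← coe_Ioo, Set.ncard_coe_finset, Nat.card_Ioo]
  omega

lemma mem_cells_iff {c : ℕ × ℕ} : c ∈ μ.cells ↔ c.2 < μ.parts c.1 := Iff.rfl

lemma zeroPos_sub_onePos {c : ℕ × ℕ} (hc : c ∈ μ.cells) :
    μ.zeroPos c.1 - μ.onePos c.2 = ((μ.arm c + μ.leg c + 1 : ℕ) : ℤ) := by
  have := (μ.lt_colLen_iff).2 hc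
  rw [μ.leg_eq, arm, zeroPos, onePos]
  rw [mem_cells_iff] at hc
  push_cast
  omega

open Classical in
noncomputable def zcount (a b : ℤ) : ℕ := (Ioo a b |>.filter (edgeZero μ)).card

lemma zcount_onePos_zeroPos (c : ℕ × ℕ) :
    μ.zcount (μ.onePos c.2) (μ.zeroPos c.1) = μ.leg c := by
  classical
  have : (Ioo (μ.onePos c.2) (μ.zeroPos c.1)).filter (edgeZero μ) =
      (Ioo c.1 (μ.colLen c.2)).image μ.zeroPos := by
    ext u
    simp only [mem_filter, mem_Ioo, mem_image, edgeZero_iff]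
    constructor
    · rintro ⟨⟨h1, h2⟩, r, rfl⟩
      exact ⟨r, ⟨μ.zeroPos_strictAnti.lt_iff_gt.1 h2,
        (μ.lt_colLen_iff).2 ((μ.onePos_lt_zeroPos_iff).1 h1)⟩, rfl⟩
    · rintro ⟨r, ⟨h1, h2⟩, rfl⟩
      exact ⟨⟨(μ.onePos_lt_zeroPos_iff).2 ((μ.lt_colLen_iff).1 h2),
        μ.zeroPos_strictAnti h1⟩, r, rfl⟩
  rw [zcount, this, card_image_of_injective _ μ.zeroPos_strictAnti.injective,
    Nat.card_Ioo, μ.leg_eq, Nat.sub_sub]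

def hookPairs : Set (ℤ × ℤ) := {p | p.2 < p.1 ∧ edgeZero μ p.1 ∧ ¬ edgeZero μ p.2}

lemma ncard_cells_eq_ncard_hookPairs (P : ℕ → ℕ → Prop) :
    {c ∈ μ.cells | P (μ.leg c) (μ.arm c + μ.leg c + 1)}.ncard =
      {p ∈ μ.hookPairs | P (μ.zcount p.2 p.1) (p.1 - p.2).toNat}.ncard := by
  refine Set.ncard_congr (fun c _ => (μ.zeroPos c.1, μ.onePos c.2)) ?_ ?_ ?_
  · rintro c ⟨hc, hP⟩
    refine ⟨⟨(μ.onePos_lt_zeroPos_iff).2 hc, ⟨c.1, rfl⟩, μ.not_edgeZero_onePos c.2⟩, ?_⟩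
    rwa [μ.zcount_onePos_zeroPos, μ.zeroPos_sub_onePos hc, Int.toNat_natCast]
  · intro c c' _ _ h
    simp only [Prod.mk.injEq] at h
    exact Prod.ext (μ.zeroPos_strictAnti.injective h.1) (μ.onePos_strictMono.injective h.2)
  · rintro ⟨t, t'⟩ ⟨⟨hlt, ht, ht'⟩, hP⟩
    obtain ⟨i, rfl⟩ := (μ.edgeZero_iff).1 ht
    obtain ⟨j, rfl⟩ := μ.exists_onePos_eq ht'
    have hc : (i, j) ∈ μ.cells := (μ.onePos_lt_zeroPos_iff).1 hlt
    refine ⟨(i, j), ⟨hc, ?_⟩, rfl⟩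
    dsimp only at hP
    rwa [μ.zcount_onePos_zeroPos (i, j), μ.zeroPos_sub_onePos hc, Int.toNat_natCast] at hP

lemma ncard_cells_leg_eq_zero : {c ∈ μ.cells | μ.leg c = 0}.ncard = μ.parts 0 := by
  conv_rhs => rw [← Nat.card_Iio (μ.parts 0), ← Set.ncard_coe_finset, coe_Iio]
  refine Set.ncard_congr (fun c _ => c.2) ?_ ?_ ?_
  · rintro c ⟨hc, -⟩
    exact lt_of_lt_of_le hc (μ.antitone (Nat.zero_le _))
  · rintro ⟨i, j⟩ ⟨i', j'⟩ ⟨hc, hc0⟩ ⟨hc', hc0'⟩ (rfl : j = j')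
    have := (μ.lt_colLen_iff).2 hc
    have := (μ.lt_colLen_iff).2 hc'
    rw [leg_eq] at hc0 hc0'
    dsimp only at *
    rw [Prod.mk.injEq]
    omega
  · intro j (hj : j < μ.parts 0)
    have := (μ.lt_colLen_iff).2 hj
    refine ⟨(μ.colLen j - 1, j), ⟨(μ.lt_colLen_iff).1 (by dsimp only; omega), ?_⟩, rfl⟩
    rw [leg_eq]
    dsimp only
    omega

lemma hooks_eq_ncard_hookPairs (α β : ℕ) :
    μ.hooks α β = {p ∈ μ.hookPairs | α * μ.zcount p.2 p.1 =
      β * ((p.1 - p.2).toNat - μ.zcount p.2 p.1) ∧ (α + β) ∣ (p.1 - p.2).toNat}.ncard := by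
  rw [hooks, ← ncard_cells_eq_ncard_hookPairs (P := fun L h => α * L = β * (h - L) ∧ (α + β) ∣ h)]
  congr! 5 with c
  rw [show μ.arm c + μ.leg c + 1 - μ.leg c = μ.arm c + 1 by omega]

lemma ncard_hookPairs_zcount_eq_zero :
    {p ∈ μ.hookPairs | μ.zcount p.2 p.1 = 0}.ncard = μ.parts 0 := by
  rw [← ncard_cells_eq_ncard_hookPairs (P := fun L _ => L = 0), ncard_cells_leg_eq_zero]

lemma cells_subset : μ.cells ⊆ Set.Iio (μ.colLen 0) ×ˢ Set.Iio (μ.parts 0) := fun c hc =>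
  ⟨(μ.lt_colLen_iff).2 (by rw [mem_cells_iff] at hc; omega),
    lt_of_lt_of_le hc (μ.antitone (Nat.zero_le _))⟩

lemma cells_finite : μ.cells.Finite :=
  ((Set.finite_Iio _).prod (Set.finite_Iio _)).subset μ.cells_subset

lemma le_size_of_image_Iio_subset {f : ℕ → ℕ × ℕ} (hf : f.Injective) {N : ℕ}
    (hsub : f '' Set.Iio N ⊆ μ.cells) : N ≤ μ.size := by
  calc N = (f '' Set.Iio N).ncard := by
        rw [Set.ncard_image_of_injective _ hf, ← coe_Iio, Set.ncard_coe_finset, Nat.card_Iio]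
    _ ≤ μ.size := Set.ncard_le_ncard hsub μ.cells_finite

lemma lt_size_of_edgeZero {t : ℤ} (ht : edgeZero μ t) : t < μ.size := by
  obtain ⟨i, rfl⟩ := (μ.edgeZero_iff).1 ht
  have : μ.parts 0 ≤ μ.size := μ.le_size_of_image_Iio_subset (Prod.mk_right_injective 0)
    (by rintro _ ⟨j, hj, rfl⟩; exact hj)
  have := μ.antitone (Nat.zero_le i)
  simp only [zeroPos]
  omega

lemma neg_size_le_of_not_edgeZero {t : ℤ} (ht : ¬ edgeZero μ t) : -(μ.size : ℤ) ≤ t := by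
  obtain ⟨j, rfl⟩ := μ.exists_onePos_eq ht
  have : μ.colLen 0 ≤ μ.size := μ.le_size_of_image_Iio_subset (Prod.mk_left_injective 0)
    (by rintro _ ⟨i, hi, rfl⟩; exact (μ.lt_colLen_iff).1 hi)
  have := μ.colLen_antitone (Nat.zero_le j)
  simp only [onePos]
  omega

lemma zcount_lt {a b : ℤ} (hab : a < b) : μ.zcount a b < (b - a).toNat := by
  classical
  have := card_filter_le (Ioo a b) (edgeZero μ)
  rw [Int.card_Ioo] at this
  rw [zcount]
  omega

end YPartition

lemma Int.toNat_natCast_mul (m : ℕ) (x : ℤ) : ((m : ℤ) * x).toNat = m * x.toNat := by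
  rcases le_total 0 x with hx | hx
  · lift x to ℕ using hx
    rw [← Nat.cast_mul, Int.toNat_natCast, Int.toNat_natCast]
  · have hmx : (m : ℤ) * x ≤ 0 := mul_nonpos_of_nonneg_of_nonpos (by positivity) hx
    rw [Int.toNat_of_nonpos hx, Int.toNat_of_nonpos hmx, mul_zero]

lemma Int.card_Ioc_filter_modEq_add_mul (a x : ℤ) {m : ℕ} (hm : 0 < m) (H : ℕ) :
    #{u ∈ Ioc a (a + m * H) | u ≡ x [ZMOD m]} = H := by
  have h := Int.Ioc_filter_modEq_card a (a + m * H) (r := m) (by exact_mod_cast hm) x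
  have hdiv : (((a + m * H : ℤ) : ℚ) - x) / ((m : ℤ) : ℚ) = ((a : ℚ) - x) / ((m : ℤ) : ℚ) + H := by
    have : ((m : ℤ) : ℚ) ≠ 0 := by exact_mod_cast hm.ne'
    push_cast
    field_simp
    ring
  rw [hdiv, Int.floor_add_natCast] at h
  omega

lemma Int.card_Ioo_filter_modEq_add_mul_le (a x : ℤ) {m : ℕ} (hm : 0 < m) (H : ℕ) :
    #{u ∈ Ioo a (a + m * H) | u ≡ x [ZMOD m]} ≤ H :=
  (card_le_card (filter_subset_filter _ Ioo_subset_Ioc_self)).trans_eq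
    (Int.card_Ioc_filter_modEq_add_mul a x hm H)

lemma Int.card_Ioo_filter_modEq_add_mul {a x : ℤ} {m : ℕ} (hm : 0 < m) (H : ℕ)
    (hax : ¬ a ≡ x [ZMOD m]) : #{u ∈ Ioo a (a + m * H) | u ≡ x [ZMOD m]} = H := by
  refine Eq.trans ?_ (Int.card_Ioc_filter_modEq_add_mul a x hm H)
  congr 1
  ext u
  simp only [mem_filter, mem_Ioo, mem_Ioc]
  constructor
  · rintro ⟨⟨h1, h2⟩, hu⟩
    exact ⟨⟨h1, h2.le⟩, hu⟩
  · rintro ⟨⟨h1, h2⟩, hu⟩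
    refine ⟨⟨h1, lt_of_le_of_ne h2 ?_⟩, hu⟩
    rintro rfl
    exact hax (Int.ModEq.trans (Int.modEq_iff_dvd.2 ⟨H, by ring⟩) hu)

lemma Int.exists_fin_modEq {m : ℕ} (hm : 0 < m) (u : ℤ) : ∃ r : Fin m, u ≡ r [ZMOD m] := by
  have h0 : 0 ≤ u % m := Int.emod_nonneg u (by omega)
  have h1 : u % m < m := Int.emod_lt_of_pos u (by omega)
  refine ⟨⟨(u % m).toNat, by omega⟩, ?_⟩
  simp only [Int.toNat_of_nonneg h0]
  exact (Int.mod_modEq u m).symm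

lemma Fin.eq_of_modEq {m : ℕ} {r r' : Fin m} (h : (r : ℤ) ≡ r' [ZMOD m]) : r = r' :=
  Fin.ext (Nat.ModEq.eq_of_lt_of_lt (Int.natCast_modEq_iff.1 h) r.isLt r'.isLt)

namespace YPartition

variable (μ : YPartition)

open Classical in
noncomputable def zcountMod (m : ℕ) (x a b : ℤ) : ℕ :=
  #{u ∈ Ioo a b | edgeZero μ u ∧ u ≡ x [ZMOD m]}

lemma zcount_eq_sum_zcountMod {m : ℕ} (hm : 0 < m) (a b : ℤ) :
    μ.zcount a b = ∑ r : Fin m, μ.zcountMod m r a b := by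
  classical
  simp only [zcount, zcountMod]
  rw [← card_biUnion]
  · congr 1
    ext u
    simp only [mem_filter, mem_biUnion, mem_univ, true_and]
    constructor
    · rintro ⟨hu, hz⟩
      obtain ⟨r, hr⟩ := Int.exists_fin_modEq hm u
      exact ⟨r, hu, hz, hr⟩
    · rintro ⟨r, hu, hz, -⟩
      exact ⟨hu, hz⟩
  · intro r _ r' _ hrr'
    refine disjoint_left.2 fun u hu hu' => hrr' (Fin.eq_of_modEq ?_)
    exact ((mem_filter.1 hu).2.2.symm).trans (mem_filter.1 hu').2.2

lemma zcountMod_le {m : ℕ} (hm : 0 < m) (x a : ℤ) (H : ℕ) :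
    μ.zcountMod m x a (a + m * H) ≤ H := by
  classical
  refine le_trans (card_le_card fun u hu => ?_) (Int.card_Ioo_filter_modEq_add_mul_le a x hm H)
  rw [mem_filter] at hu ⊢
  exact ⟨hu.1, hu.2.2⟩

end YPartition

lemma Fin.sum_eq_sub_mul_iff {m H : ℕ} {N : Fin m → ℕ} {l p₀ : Fin m}
    (hle : ∀ p, N p ≤ H) (hlt : N p₀ < H)
    (hbelow : ∀ p < p₀, p ≤ l → l ≤ p₀ → N p = 0)
    (habove : ∀ p, p₀ < p → p₀ ≤ l → l ≤ p → N p = H) :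
    ∑ p, N p = (m - ((l : ℕ) + 1)) * H ↔ p₀ = l ∧ N p₀ = 0 := by
  -- Compare `N` with `f`: they agree off `p₀` if `p₀ = l`; `N` exceeds `f` at `l` if `p₀ < l`;
  -- `N` falls short of `f` at `p₀` if `l < p₀`.
  set f : Fin m → ℕ := fun p => if l < p then H else 0
  have hf : ∑ p, f p = (m - ((l : ℕ) + 1)) * H := by
    rw [← Finset.sum_filter, Finset.sum_const, smul_eq_mul, filter_lt_eq_Ioi, Fin.card_Ioi,
      Nat.sub_sub, Nat.add_comm 1]
  rw [← hf]
  rcases lt_trichotomy p₀ l with h | rfl | h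
  · have : ∑ p, f p < ∑ p, N p := by
      refine sum_lt_sum (fun p _ => ?_) ⟨l, mem_univ _, ?_⟩
      · by_cases hp : l < p
        · simp only [f, if_pos hp, habove p (h.trans hp) h.le hp.le, le_refl]
        · simp only [f, if_neg hp, Nat.zero_le]
      · simp only [f, lt_irrefl, if_false, habove l h h.le le_rfl]
        omega
    exact iff_of_false this.ne' fun h' => h.ne h'.1
  · have hN : ∀ p, N p = f p + if p = p₀ then N p₀ else 0 := by
      intro p
      rcases lt_trichotomy p p₀ with hp | rfl | hp
      · simp [f, hp.not_gt, hp.ne, hbelow p hp hp.le le_rfl]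
      · simp [f]
      · simp [f, hp, hp.ne', habove p hp le_rfl hp.le]
    rw [sum_congr rfl fun p _ => hN p, sum_add_distrib, sum_ite_eq']
    simp
  · have : ∑ p, N p < ∑ p, f p := by
      refine sum_lt_sum (fun p _ => ?_) ⟨p₀, mem_univ _, ?_⟩
      · by_cases hp : l < p
        · simp only [f, if_pos hp, hle p]
        · simp only [f, if_neg hp]
          exact (hbelow p (lt_of_le_of_lt (not_lt.1 hp) h) (not_lt.1 hp) h.le).le
      · simp only [f, if_pos h, hlt]
    exact iff_of_false this.ne fun h' => h.ne' h'.1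

lemma StrictMono.add_le_of_le_of_le {m : ℕ} {f : Fin m → ℤ} (hf : StrictMono f) {l : Fin m}
    {d : ℤ} (hl : ∀ r, r ≠ l → d ≤ |f l - f r|) {p p' : Fin m} (hpp' : p < p') (hp : p ≤ l)
    (hp' : l ≤ p') : f p + d ≤ f p' := by
  rcases hp.lt_or_eq with hp | rfl
  · have hd := hl p hp.ne
    rw [abs_of_pos (sub_pos.2 (hf hp))] at hd
    linarith [hf.monotone hp']
  · have hd := hl p' hpp'.ne'
    rw [abs_of_neg (sub_neg.2 (hf hpp'))] at hd
    linarith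

lemma hook_condition_iff {α β m L H : ℕ} (hαβ : α + β = m) (hL : L ≤ m * H) :
    α * L = β * (m * H - L) ↔ L = β * H := by
  subst hαβ
  rcases Nat.eq_zero_or_pos (α + β) with h0 | hpos
  · obtain ⟨rfl, rfl⟩ : α = 0 ∧ β = 0 := by omega
    obtain rfl : L = 0 := by simpa using hL
    simp
  · have hpos : (α : ℤ) + β ≠ 0 := by exact_mod_cast hpos.ne'
    zify [hL]
    calc _ ↔ ((α : ℤ) + β) * L = (α + β) * (β * H) := by
          constructor <;> intro h <;> linear_combination h
      _ ↔ _ := mul_right_inj' hpos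

section Quotient

variable {m : ℕ} {lam : YPartition} {q : Fin m → YPartition} {s : Fin m → ℤ}

lemma zcountMod_quotient_self (hm : 0 < m)
    (hq : ∀ j v, edgeZero (q j) v ↔ edgeZero lam (m * v + s j))
    (hs : ∀ j, s j ≡ j [ZMOD m]) (j : Fin m) (t₁ t₀ : ℤ) :
    lam.zcountMod m j (m * t₁ + s j) (m * t₀ + s j) = (q j).zcount t₁ t₀ := by
  classical
  have hm' : (0 : ℤ) < m := by exact_mod_cast hm
  have hinj : Function.Injective fun v : ℤ => (m : ℤ) * v + s j := fun v w h =>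
    mul_right_injective₀ hm'.ne' (add_right_cancel h)
  rw [YPartition.zcountMod, YPartition.zcount]
  refine (congrArg card ?_).trans (card_image_of_injective _ hinj)
  ext u
  simp only [mem_filter, mem_Ioo, mem_image]
  constructor
  · rintro ⟨⟨h₁, h₀⟩, hz, hu⟩
    obtain ⟨v, rfl⟩ := Int.modEq_iff_add_fac.1 (hu.trans (hs j).symm).symm
    refine ⟨v, ⟨⟨?_, ?_⟩, (hq j v).2 (by rwa [add_comm])⟩, by ring⟩ <;> nlinarith
  · rintro ⟨v, ⟨⟨h₁, h₀⟩, hz⟩, rfl⟩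
    refine ⟨⟨?_, ?_⟩, (hq j v).1 hz, ?_⟩
    · nlinarith
    · nlinarith
    · exact (Int.modEq_iff_add_fac.2 ⟨v, by ring⟩).symm.trans (hs j)

/-- The positions of class `r` after `m t₁ + s j` come from positions `≥ |q r|` of `q r`,
where it has only `1`s. -/
lemma zcountMod_eq_zero_of_add_le (hq : ∀ j v, edgeZero (q j) v ↔ edgeZero lam (m * v + s j))
    (hs : ∀ j, s j ≡ j [ZMOD m]) {j r : Fin m} {n : ℕ} (hn : (q j).size + (q r).size ≤ n)
    (hsep : s r + m * n ≤ s j) {t₁ : ℤ} (ht₁ : ¬ edgeZero (q j) t₁) (b : ℤ) :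
    lam.zcountMod m r (m * t₁ + s j) b = 0 := by
  classical
  rw [YPartition.zcountMod, card_eq_zero, filter_eq_empty_iff]
  rintro u hu ⟨hz, hr⟩
  obtain ⟨v, rfl⟩ := Int.modEq_iff_add_fac.1 (hr.trans (hs r).symm).symm
  have hv := (q r).lt_size_of_edgeZero ((hq r v).2 (by rwa [add_comm]))
  have ht₁ := (q j).neg_size_le_of_not_edgeZero ht₁
  have hu := (mem_Ioo.1 hu).1
  have hn' : ((q j).size : ℤ) + (q r).size ≤ n := by exact_mod_cast hn
  nlinarith

/-- The positions of class `r` before `m (t₁ + H) + s j` come from positions `< -|q r|` of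
`q r`, where it has only `0`s. -/
lemma zcountMod_eq_of_le_add (hm : 0 < m)
    (hq : ∀ j v, edgeZero (q j) v ↔ edgeZero lam (m * v + s j))
    (hs : ∀ j, s j ≡ j [ZMOD m]) {j r : Fin m} (hrj : r ≠ j) {n : ℕ}
    (hn : (q j).size + (q r).size ≤ n) (hsep : s j + m * n ≤ s r) {t₁ : ℤ} {H : ℕ}
    (ht₀ : edgeZero (q j) (t₁ + H)) :
    lam.zcountMod m r (m * t₁ + s j) (m * t₁ + s j + m * H) = H := by
  classical
  have hstart : ¬ m * t₁ + s j ≡ r [ZMOD m] := by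
    intro h
    have hj : m * t₁ + s j ≡ s j [ZMOD m] := Int.modEq_iff_add_fac.2 ⟨-t₁, by ring⟩
    exact hrj (Fin.eq_of_modEq (h.symm.trans (hj.trans (hs j))))
  rw [YPartition.zcountMod]
  refine (congrArg card (filter_congr fun u hu => and_iff_right_of_imp fun hr => ?_)).trans
    (Int.card_Ioo_filter_modEq_add_mul hm H hstart)
  obtain ⟨v, rfl⟩ := Int.modEq_iff_add_fac.1 (hr.trans (hs r).symm).symm
  rw [add_comm, ← hq]
  by_contra hv
  have hv := (q r).neg_size_le_of_not_edgeZero hv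
  have ht₀ := (q j).lt_size_of_edgeZero ht₀
  have hu := (mem_Ioo.1 hu).2
  have hn' : ((q j).size : ℤ) + (q r).size ≤ n := by exact_mod_cast hn
  nlinarith

theorem zcount_eq_sub_mul_iff (hm : 0 < m)
    (hq : ∀ j v, edgeZero (q j) v ↔ edgeZero lam (m * v + s j))
    (hs : ∀ j, s j ≡ j [ZMOD m]) {σ : Equiv.Perm (Fin m)} (hσ : StrictMono (s ∘ σ)) {n : ℕ}
    (hn : ∀ i j, i ≠ j → (q i).size + (q j).size ≤ n) {l : Fin m}
    (hl : ∀ r, r ≠ l → (m : ℤ) * n ≤ |s (σ l) - s (σ r)|) {j : Fin m} {t₀ t₁ : ℤ}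
    (hp : (t₀, t₁) ∈ (q j).hookPairs) :
    lam.zcount (m * t₁ + s j) (m * t₀ + s j) = (m - ((l : ℕ) + 1)) * (t₀ - t₁).toNat ↔
      j = σ l ∧ (q j).zcount t₁ t₀ = 0 := by
  obtain ⟨hlt, ht₀, ht₁⟩ := hp
  obtain ⟨H, rfl⟩ : ∃ H : ℕ, t₀ = t₁ + H := ⟨(t₀ - t₁).toNat, by dsimp only at hlt; omega⟩
  rw [show (m : ℤ) * (t₁ + H) + s j = m * t₁ + s j + m * H by ring,
    show t₁ + H - t₁ = H by ring, Int.toNat_natCast]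
  have hH : 0 < H := Nat.pos_of_ne_zero fun h => ht₁ (by simpa [h] using ht₀)
  have hself : lam.zcountMod m (σ (σ.symm j)) (m * t₁ + s j) (m * t₁ + s j + m * H) =
      (q j).zcount t₁ (t₁ + H) := by
    rw [Equiv.apply_symm_apply, show (m : ℤ) * t₁ + s j + m * H = m * (t₁ + H) + s j by ring]
    exact zcountMod_quotient_self hm hq hs j t₁ (t₁ + H)
  rw [lam.zcount_eq_sum_zcountMod hm, ← Equiv.sum_comp σ,
    Fin.sum_eq_sub_mul_iff (p₀ := σ.symm j) (fun p => lam.zcountMod_le hm _ _ H), hself,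
    Equiv.symm_apply_eq]
  · rw [hself]
    simpa using (q j).zcount_lt (show t₁ < t₁ + H by omega)
  · intro p hp hpl hlp
    have hpj : j ≠ σ p := fun h => hp.ne (by rw [h, Equiv.symm_apply_apply])
    refine zcountMod_eq_zero_of_add_le hq hs (hn j (σ p) hpj) ?_ ht₁ _
    simpa using hσ.add_le_of_le_of_le hl hp hpl hlp
  · intro p hp hlp hpl
    have hpj : σ p ≠ j := fun h => hp.ne' (by rw [← h, Equiv.symm_apply_apply])
    refine zcountMod_eq_of_le_add hm hq hs hpj (hn j (σ p) hpj.symm) ?_ ht₀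
    simpa using hσ.add_le_of_le_of_le hl hp hlp hpl

lemma mk_mem_hookPairs_iff (hm : 0 < m)
    (hq : ∀ j v, edgeZero (q j) v ↔ edgeZero lam (m * v + s j)) {j : Fin m} {t₀ t₁ : ℤ} :
    (m * t₀ + s j, m * t₁ + s j) ∈ lam.hookPairs ↔ (t₀, t₁) ∈ (q j).hookPairs := by
  have hm' : (0 : ℤ) < m := by exact_mod_cast hm
  simp only [YPartition.hookPairs, Set.mem_ofPred_eq, hq, add_lt_add_iff_right,
    mul_lt_mul_iff_right₀ hm']

lemma exists_eq_mul_add_of_dvd (hm : 0 < m) (hs : ∀ j, s j ≡ j [ZMOD m]) {t t' : ℤ}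
    (h : (m : ℤ) ∣ t - t') : ∃ j t₀ t₁, t = m * t₀ + s j ∧ t' = m * t₁ + s j := by
  obtain ⟨j, hj⟩ := Int.exists_fin_modEq hm t
  obtain ⟨t₀, ht₀⟩ := Int.modEq_iff_add_fac.1 (hj.trans (hs j).symm).symm
  obtain ⟨d, hd⟩ := h
  exact ⟨j, t₀, t₀ - d, by rw [ht₀]; ring, by linear_combination ht₀ - hd⟩

lemma hook_condition_iff_of_mem_hookPairs (hm : 0 < m)
    (hq : ∀ j v, edgeZero (q j) v ↔ edgeZero lam (m * v + s j))
    (hs : ∀ j, s j ≡ j [ZMOD m]) {σ : Equiv.Perm (Fin m)} (hσ : StrictMono (s ∘ σ)) {n : ℕ}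
    (hn : ∀ i j, i ≠ j → (q i).size + (q j).size ≤ n) {l : Fin m}
    (hl : ∀ r, r ≠ l → (m : ℤ) * n ≤ |s (σ l) - s (σ r)|) {j : Fin m} {t₀ t₁ : ℤ}
    (hp : (t₀, t₁) ∈ (q j).hookPairs) :
    ((l : ℕ) + 1) * lam.zcount (m * t₁ + s j) (m * t₀ + s j) =
        (m - ((l : ℕ) + 1)) * ((m * t₀ + s j - (m * t₁ + s j)).toNat -
          lam.zcount (m * t₁ + s j) (m * t₀ + s j)) ∧
      m ∣ (m * t₀ + s j - (m * t₁ + s j)).toNat ↔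
      j = σ l ∧ (q j).zcount t₁ t₀ = 0 := by
  have hlen : (m * t₀ + s j - (m * t₁ + s j)).toNat = m * (t₀ - t₁).toNat := by
    rw [show (m : ℤ) * t₀ + s j - (m * t₁ + s j) = m * (t₀ - t₁) by ring, Int.toNat_natCast_mul]
  have hL : lam.zcount (m * t₁ + s j) (m * t₀ + s j) ≤ m * (t₀ - t₁).toNat :=
    hlen ▸ (lam.zcount_lt (by nlinarith [hp.1])).le
  rw [hlen, and_iff_left (dvd_mul_right _ _), hook_condition_iff (by omega) hL,
    zcount_eq_sub_mul_iff hm hq hs hσ hn hl hp]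

theorem hooks_eq_parts_zero (hm : 0 < m)
    (hq : ∀ j v, edgeZero (q j) v ↔ edgeZero lam (m * v + s j))
    (hs : ∀ j, s j ≡ j [ZMOD m]) {σ : Equiv.Perm (Fin m)} (hσ : StrictMono (s ∘ σ)) {n : ℕ}
    (hn : ∀ i j, i ≠ j → (q i).size + (q j).size ≤ n) {l : Fin m}
    (hl : ∀ r, r ≠ l → (m : ℤ) * n ≤ |s (σ l) - s (σ r)|) :
    lam.hooks ((l : ℕ) + 1) (m - ((l : ℕ) + 1)) = (q (σ l)).parts 0 := by
  have hinj : Function.Injective fun p : ℤ × ℤ => (m * p.1 + s (σ l), m * p.2 + s (σ l)) := by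
    intro p p' h
    simp only [Prod.mk.injEq, add_left_inj, mul_right_inj' (Int.natCast_pos.2 hm).ne'] at h
    exact Prod.ext h.1 h.2
  rw [lam.hooks_eq_ncard_hookPairs, show (l : ℕ) + 1 + (m - ((l : ℕ) + 1)) = m by omega,
    ← (q (σ l)).ncard_hookPairs_zcount_eq_zero]
  refine (congrArg Set.ncard ?_).trans (Set.ncard_image_of_injective _ hinj)
  ext ⟨t, t'⟩
  simp only [Set.mem_ofPred_eq, Set.mem_image, Prod.mk.injEq]
  constructor
  · rintro ⟨hp, hcond⟩
    have hdvd : (m : ℤ) ∣ t - t' := by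
      rw [← Int.toNat_of_nonneg (sub_nonneg.2 hp.1.le)]
      exact Int.natCast_dvd_natCast.2 hcond.2
    obtain ⟨j, t₀, t₁, rfl, rfl⟩ := exists_eq_mul_add_of_dvd hm hs hdvd
    rw [mk_mem_hookPairs_iff hm hq] at hp
    obtain ⟨rfl, h0⟩ := (hook_condition_iff_of_mem_hookPairs hm hq hs hσ hn hl hp).1 hcond
    exact ⟨(t₀, t₁), ⟨hp, h0⟩, rfl, rfl⟩
  · rintro ⟨⟨t₀, t₁⟩, ⟨hp, h0⟩, rfl, rfl⟩
    exact ⟨(mk_mem_hookPairs_iff hm hq).2 hp,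
      (hook_condition_iff_of_mem_hookPairs hm hq hs hσ hn hl hp).2 ⟨rfl, h0⟩⟩

end Quotient

/-- Here `q` is the `m`-quotient and `k` the `m`-shift of `lam`, characterized by the
edge-sequence relation `hq`; `σ` sorts the values `s_j = m·k_j + j` increasingly; the element
`l : Fin m` corresponds to the (1-based) position `l + 1` in the sorted order. -/
theorem statement17_general (m : ℕ) (lam : YPartition)
    (q : Fin m → YPartition) (k : Fin m → ℤ)
    (hq : ∀ (j : Fin m) (t : ℤ),
      edgeZero (q j) t ↔ edgeZero lam ((m : ℤ) * (t + k j) + ((j : ℕ) : ℤ)))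
    (σ : Equiv.Perm (Fin m))
    (hσ : StrictMono fun l : Fin m => (m : ℤ) * k (σ l) + (((σ l : Fin m) : ℕ) : ℤ))
    (n : ℕ)
    (hn1 : ∀ i j : Fin m, i ≠ j → (q i).size + (q j).size ≤ n)
    (l : Fin m)
    (hl : ∀ r : Fin m, r ≠ l →
      ((m : ℤ) * n ≤ |((m : ℤ) * k (σ l) + (((σ l : Fin m) : ℕ) : ℤ)) -
        ((m : ℤ) * k (σ r) + (((σ r : Fin m) : ℕ) : ℤ))|)) :
    YPartition.hooks ((l : ℕ) + 1) (m - ((l : ℕ) + 1)) lam = (q (σ l)).parts 0 := by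
  refine hooks_eq_parts_zero l.pos (s := fun j => (m : ℤ) * k j + j) (fun j v => ?_)
    (fun j => Int.modEq_iff_add_fac.2 ⟨-k j, by ring⟩) hσ hn1 hl
  rw [hq]
  ring_nf

/-- Here `q` is the `m`-quotient and `k` the `m`-shift of `lam`,
characterized by the edge-sequence relation `hq`; `σ` sorts the values
`s_j = m·k_j + j` increasingly; `n` is the maximum of `|λ^{(i)}| + |λ^{(j)}|` over
pairs `i ≠ j`; the element `l : Fin m` corresponds to the (1-based) position
`l + 1` in the sorted order. -/
theorem statement17 (m : ℕ) (hm : 2 ≤ m) (lam : YPartition)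
    (q : Fin m → YPartition) (k : Fin m → ℤ)
    (hq : ∀ (j : Fin m) (t : ℤ),
      edgeZero (q j) t ↔ edgeZero lam ((m : ℤ) * (t + k j) + ((j : ℕ) : ℤ)))
    (σ : Equiv.Perm (Fin m))
    (hσ : StrictMono fun l : Fin m => (m : ℤ) * k (σ l) + (((σ l : Fin m) : ℕ) : ℤ))
    (n : ℕ)
    (hn1 : ∀ i j : Fin m, i ≠ j → (q i).size + (q j).size ≤ n)
    (hn2 : ∃ i j : Fin m, i ≠ j ∧ (q i).size + (q j).size = n)
    (l : Fin m)
    (hl : ∀ r : Fin m, r ≠ l →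
      ((m : ℤ) * n ≤ |((m : ℤ) * k (σ l) + (((σ l : Fin m) : ℕ) : ℤ)) -
        ((m : ℤ) * k (σ r) + (((σ r : Fin m) : ℕ) : ℤ))|)) :
    YPartition.hooks ((l : ℕ) + 1) (m - ((l : ℕ) + 1)) lam = (q (σ l)).parts 0 :=
  statement17_general m lam q k hq σ hσ n hn1 l hl
end
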